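/- Let F be a function on the space of 2×2 complex symmetric matrices satisfying the weight-k transformation law F(γ·M) = det(CM+D)^k F(M) for all γ = [[A,B],[C,D]] ∈ Sp(4,ℤ) (trivial multiplier). If k is not divisible by 5, then F(σ₁) = 0 at the fixed point σ₁ = [[ζ, ζ+ζ⁻²],[ζ+ζ⁻², -ζ⁻¹]] with ζ = e^{2πi/5}. -/

import Mathlib

/-!
The element `h = [[stabA, stabB], [stabC, stabD]]` of `Sp(4, ℤ)` fixes `σ₁` and has
automorphy factor `det (stabC σ₁ + stabD) = ζ`. The transformation law at the fixed point reads
`F σ₁ = ζ ^ k * F σ₁`, and `ζ ^ k ≠ 1` since `ζ` is a primitive fifth root of unity and `5 ∤ k`.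
-/

open Matrix

/-- The standard symplectic form `J = [[0, I], [-I, 0]]` over ℤ. -/
def symplJ (g : ℕ) : Matrix (Fin g ⊕ Fin g) (Fin g ⊕ Fin g) ℤ :=
  Matrix.fromBlocks 0 1 (-1) 0

noncomputable def zeta5 : ℂ := Complex.exp (2 * Real.pi * Complex.I / 5)

/-- The fixed point `σ₁` with `ζ = e^{2πi/5}`. -/
noncomputable def sigma1 : Matrix (Fin 2) (Fin 2) ℂ :=
  !![zeta5, zeta5 + zeta5 ^ (-2 : ℤ); zeta5 + zeta5 ^ (-2 : ℤ), -zeta5⁻¹]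

theorem IsPrimitiveRoot.eq_zero_of_eq_zpow_mul {K : Type*} [Field K] {ζ a : K} {n : ℕ} {k : ℤ}
    (hζ : IsPrimitiveRoot ζ n) (hk : ¬ (n : ℤ) ∣ k) (ha : a = ζ ^ k * a) : a = 0 := by
  have h : (ζ ^ k - 1) * a = 0 := by linear_combination -ha
  refine (mul_eq_zero.1 h).resolve_left fun hζk => hk ?_
  exact (hζ.zpow_eq_one_iff_dvd k).1 (sub_eq_zero.1 hζk)

theorem zeta5_isPrimitiveRoot : IsPrimitiveRoot zeta5 5 := by
  simpa [zeta5] using Complex.isPrimitiveRoot_exp 5 (by norm_num)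

theorem zeta5_cyclotomic : zeta5 ^ 4 + zeta5 ^ 3 + zeta5 ^ 2 + zeta5 + 1 = 0 := by
  simpa [Finset.sum_range_succ, add_assoc, add_comm, add_left_comm] using
    zeta5_isPrimitiveRoot.geom_sum_eq_zero (by norm_num)

theorem sigma1_eq : sigma1 = !![zeta5, zeta5 + zeta5 ^ 3; zeta5 + zeta5 ^ 3, -zeta5 ^ 4] := by
  have h5 := zeta5_isPrimitiveRoot.pow_eq_one
  rw [sigma1, _root_.zpow_neg,
    inv_eq_of_mul_eq_one_left (a := zeta5 ^ 3) (by norm_cast; linear_combination h5),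
    inv_eq_of_mul_eq_one_left (a := zeta5 ^ 4) (by linear_combination h5)]

theorem sigma1_transpose : sigma1ᵀ = sigma1 := by
  rw [sigma1_eq]
  ext i j
  fin_cases i <;> fin_cases j <;> rfl

def stabA : Matrix (Fin 2) (Fin 2) ℤ := !![0, -1; 0, 0]
def stabB : Matrix (Fin 2) (Fin 2) ℤ := !![-1, -1; -1, 0]
def stabC : Matrix (Fin 2) (Fin 2) ℤ := !![0, 0; 1, 0]
def stabD : Matrix (Fin 2) (Fin 2) ℤ := !![0, -1; 0, 1]

noncomputable abbrev stabFactor : Matrix (Fin 2) (Fin 2) ℂ :=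
  stabC.map (Int.cast : ℤ → ℂ) * sigma1 + stabD.map (Int.cast : ℤ → ℂ)

theorem stab_symplectic :
    fromBlocks stabA stabB stabC stabD * symplJ 2 * (fromBlocks stabA stabB stabC stabD)ᵀ =
      symplJ 2 := by
  decide

theorem det_stabFactor : stabFactor.det = zeta5 := by
  simp [sigma1_eq, stabC, stabD, det_fin_two, mul_apply, Fin.sum_univ_succ]

theorem isUnit_stabFactor : IsUnit stabFactor := by
  rw [isUnit_iff_isUnit_det, det_stabFactor]
  exact (zeta5_isPrimitiveRoot.ne_zero (by norm_num)).isUnit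

theorem stab_smul_sigma1 :
    (stabA.map (Int.cast : ℤ → ℂ) * sigma1 + stabB.map (Int.cast : ℤ → ℂ)) * stabFactor⁻¹ =
      sigma1 := by
  have := isUnit_stabFactor.invertible
  rw [mul_inv_eq_iff_eq_mul_of_invertible, stabFactor, sigma1_eq]
  -- each entry is an identity in `ℤ[ζ]` modulo the cyclotomic relation
  have := zeta5_cyclotomic
  ext i j
  fin_cases i <;> fin_cases j <;>
    simp [stabA, stabB, stabC, stabD, mul_apply, Fin.sum_univ_succ] <;> grind

/-- A weight-`k` Siegel modular form (trivial multiplier) vanishes at `σ₁` unless `5 ∣ k`. -/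
theorem stmt6 (k : ℤ) (F : Matrix (Fin 2) (Fin 2) ℂ → ℂ)
    (hF : ∀ A B C D : Matrix (Fin 2) (Fin 2) ℤ,
      Matrix.fromBlocks A B C D * symplJ 2 * (Matrix.fromBlocks A B C D)ᵀ = symplJ 2 →
      ∀ M : Matrix (Fin 2) (Fin 2) ℂ, Mᵀ = M →
      IsUnit (C.map (Int.cast : ℤ → ℂ) * M + D.map (Int.cast : ℤ → ℂ)) →
      F ((A.map (Int.cast : ℤ → ℂ) * M + B.map (Int.cast : ℤ → ℂ)) *
          (C.map (Int.cast : ℤ → ℂ) * M + D.map (Int.cast : ℤ → ℂ))⁻¹) =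
        ((C.map (Int.cast : ℤ → ℂ) * M + D.map (Int.cast : ℤ → ℂ)).det) ^ k * F M)
    (hk : ¬ ((5:ℤ) ∣ k)) :
    F sigma1 = 0 := by
  have hfix := hF stabA stabB stabC stabD stab_symplectic sigma1 sigma1_transpose isUnit_stabFactor
  rw [stab_smul_sigma1, det_stabFactor] at hfix
  exact zeta5_isPrimitiveRoot.eq_zero_of_eq_zpow_mul (by exact_mod_cast hk) hfix
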